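/- arXiv:2008.04763 — 6 statements merged into one kernel-verified Lean document; each statement's English description precedes it below -/
import Mathlib

section
/- Let (A,{·,·},μ,α,β) be a BiHom-Poisson algebra and let α',β' : A → A be linear maps that are multiplicative with respect to both μ and {·,·}, such that any two of the maps α, β, α', β' commute. Then A equipped with the twisted products {x,y}_{α',β'} = {α'(x),β'(y)} and μ_{α',β'}(x,y) = μ(α'(x),β'(y)) and the structure maps α∘α' and β∘β' is again a BiHom-Poisson algebra. -/
/-- A BiHom-Poisson algebra structure on a `K`-vector space `A` (K a field of
characteristic 0), given by bilinear maps `br` (the bracket `{·,·}`) and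
`mul` (the product `μ`) and commuting linear maps `α`, `β` that are
multiplicative with respect to both operations. -/
structure IsBiHomPoisson {K A : Type*} [Field K] [CharZero K]
    [AddCommGroup A] [Module K A]
    (br mul : A →ₗ[K] A →ₗ[K] A) (α β : A →ₗ[K] A) : Prop where
  comm_maps : ∀ x, α (β x) = β (α x)
  map_mul_alpha : ∀ x y, α (mul x y) = mul (α x) (α y)
  map_mul_beta : ∀ x y, β (mul x y) = mul (β x) (β y)
  map_br_alpha : ∀ x y, α (br x y) = br (α x) (α y)
  map_br_beta : ∀ x y, β (br x y) = br (β x) (β y)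
  assoc : ∀ x y z, mul (mul x y) (β z) = mul (α x) (mul y z)
  mul_comm : ∀ x y, mul (β x) (α y) = mul (β y) (α x)
  skew : ∀ x y, br (β x) (α y) = - br (β y) (α x)
  jacobi : ∀ x y z,
    br (β (β x)) (br (β y) (α z)) + br (β (β y)) (br (β z) (α x))
      + br (β (β z)) (br (β x) (α y)) = 0
  leibniz : ∀ x y z,
    br (α (β x)) (mul y z) = mul (br (β x) y) (β z) + mul (β y) (br (α x) z)

/-- Twisting of a BiHom-Poisson algebra along two additional multiplicative
maps `α'`, `β'` commuting with everything yields a BiHom-Poisson algebra. -/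
theorem twisting_of_biHomPoisson {K A : Type*} [Field K] [CharZero K]
    [AddCommGroup A] [Module K A]
    (br mul : A →ₗ[K] A →ₗ[K] A) (α β α' β' : A →ₗ[K] A)
    (h : IsBiHomPoisson br mul α β)
    (hα'mul : ∀ x y, α' (mul x y) = mul (α' x) (α' y))
    (hα'br : ∀ x y, α' (br x y) = br (α' x) (α' y))
    (hβ'mul : ∀ x y, β' (mul x y) = mul (β' x) (β' y))
    (hβ'br : ∀ x y, β' (br x y) = br (β' x) (β' y))
    (hαα' : ∀ x, α (α' x) = α' (α x))
    (hαβ' : ∀ x, α (β' x) = β' (α x))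
    (hβα' : ∀ x, β (α' x) = α' (β x))
    (hββ' : ∀ x, β (β' x) = β' (β x))
    (hα'β' : ∀ x, α' (β' x) = β' (α' x)) :
    IsBiHomPoisson (br.compl₁₂ α' β') (mul.compl₁₂ α' β')
      (α ∘ₗ α') (β ∘ₗ β') := by
  have hβα'' : ∀ x, α' (β x) = β (α' x) := fun x => (hβα' x).symm
  have hββ'' : ∀ x, β' (β x) = β (β' x) := fun x => (hββ' x).symm
  have hαα'' : ∀ x, α' (α x) = α (α' x) := fun x => (hαα' x).symm
  have hαβ'' : ∀ x, β' (α x) = α (β' x) := fun x => (hαβ' x).symm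
  constructor
  case comm_maps =>
    intro x
    simp only [LinearMap.comp_apply, hβα'', hββ'', hαα'', hαβ'', hα'β', h.comm_maps]
  case map_mul_alpha =>
    intro x y
    simp only [LinearMap.comp_apply, LinearMap.compl₁₂_apply, hα'mul, hβ'mul,
      h.map_mul_alpha, hβα'', hββ'', hαα'', hαβ'', hα'β']
  case map_mul_beta =>
    intro x y
    simp only [LinearMap.comp_apply, LinearMap.compl₁₂_apply, hα'mul, hβ'mul,
      h.map_mul_beta, hβα'', hββ'', hαα'', hαβ'', hα'β']
  case map_br_alpha =>
    intro x y
    simp only [LinearMap.comp_apply, LinearMap.compl₁₂_apply, hα'br, hβ'br,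
      h.map_br_alpha, hβα'', hββ'', hαα'', hαβ'', hα'β']
  case map_br_beta =>
    intro x y
    simp only [LinearMap.comp_apply, LinearMap.compl₁₂_apply, hα'br, hβ'br,
      h.map_br_beta, hβα'', hββ'', hαα'', hαβ'', hα'β']
  case assoc =>
    intro x y z
    simp only [LinearMap.comp_apply, LinearMap.compl₁₂_apply, hα'mul, hβ'mul,
      hβα'', hββ'', hαα'', hαβ'', hα'β']
    simpa only [hβα'', hββ'', hαα'', hαβ'', hα'β'] using h.assoc (α' (α' x)) (β' (α' y)) (β' (β' z))
  case mul_comm =>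
    intro x y
    simp only [LinearMap.comp_apply, LinearMap.compl₁₂_apply, hα'mul, hβ'mul,
      hβα'', hββ'', hαα'', hαβ'', hα'β']
    simpa only [hβα'', hββ'', hαα'', hαβ'', hα'β'] using h.mul_comm (β' (α' x)) (β' (α' y))
  case skew =>
    intro x y
    simp only [LinearMap.comp_apply, LinearMap.compl₁₂_apply, hα'br, hβ'br,
      hβα'', hββ'', hαα'', hαβ'', hα'β']
    simpa only [hβα'', hββ'', hαα'', hαβ'', hα'β'] using h.skew (β' (α' x)) (β' (α' y))
  case jacobi =>
    intro x y z
    simp only [LinearMap.comp_apply, LinearMap.compl₁₂_apply, hα'br, hβ'br,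
      hβα'', hββ'', hαα'', hαβ'', hα'β']
    simpa only [hβα'', hββ'', hαα'', hαβ'', hα'β'] using h.jacobi (β' (β' (α' x))) (β' (β' (α' y))) (β' (β' (α' z)))
  case leibniz =>
    intro x y z
    simp only [LinearMap.comp_apply, LinearMap.compl₁₂_apply, hα'br, hβ'br,
      hα'mul, hβ'mul, hβα'', hββ'', hαα'', hαβ'', hα'β']
    simpa only [hβα'', hββ'', hαα'', hαβ'', hα'β'] using h.leibniz (β' (α' (α' x))) (β' (α' y)) (β' (β' z))
end

section
/- Let (A,{·,·},μ,α,β) and (B,{·,·}',μ',γ,δ) be BiHom-Poisson algebras. Let α',β' : A → A be linear maps multiplicative with respect to μ and {·,·} such that any two of α,β,α',β' commute, and let γ',δ' : B → B be linear maps multiplicative with respect to μ' and {·,·}' such that any two of γ,δ,γ',δ' commute. If f : A → B is a morphism of BiHom-Poisson algebras (f(μ(x,y)) = μ'(f(x),f(y)), f({x,y}) = {f(x),f(y)}', f∘α = γ∘f, f∘β = δ∘f) satisfying f∘α' = γ'∘f and f∘β' = δ'∘f, then f is also a morphism of BiHom-Poisson algebras from A_{α',β'} = (A, {·,·}∘(α'⊗β'),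 μ∘(α'⊗β'), α∘α', β∘β') to B_{γ',δ'} = (B, {·,·}'∘(γ'⊗δ'), μ'∘(γ'⊗δ'), γ∘γ', δ∘δ'). -/
/-- A morphism of BiHom-Poisson algebras commuting with the extra twisting maps
is also a morphism between the twisted BiHom-Poisson algebras. -/
theorem morphism_of_twisted_biHomPoisson {K A B : Type*} [Field K] [CharZero K]
    [AddCommGroup A] [Module K A] [AddCommGroup B] [Module K B]
    (brA mulA : A →ₗ[K] A →ₗ[K] A) (α β α' β' : A →ₗ[K] A)
    (brB mulB : B →ₗ[K] B →ₗ[K] B) (γ δ γ' δ' : B →ₗ[K] B)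
    (hA : IsBiHomPoisson brA mulA α β)
    (hB : IsBiHomPoisson brB mulB γ δ)
    (hα'mul : ∀ x y, α' (mulA x y) = mulA (α' x) (α' y))
    (hα'br : ∀ x y, α' (brA x y) = brA (α' x) (α' y))
    (hβ'mul : ∀ x y, β' (mulA x y) = mulA (β' x) (β' y))
    (hβ'br : ∀ x y, β' (brA x y) = brA (β' x) (β' y))
    (hαα' : ∀ x, α (α' x) = α' (α x))
    (hαβ' : ∀ x, α (β' x) = β' (α x))
    (hβα' : ∀ x, β (α' x) = α' (β x))
    (hββ' : ∀ x, β (β' x) = β' (β x))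
    (hα'β' : ∀ x, α' (β' x) = β' (α' x))
    (hγ'mul : ∀ x y, γ' (mulB x y) = mulB (γ' x) (γ' y))
    (hγ'br : ∀ x y, γ' (brB x y) = brB (γ' x) (γ' y))
    (hδ'mul : ∀ x y, δ' (mulB x y) = mulB (δ' x) (δ' y))
    (hδ'br : ∀ x y, δ' (brB x y) = brB (δ' x) (δ' y))
    (hγγ' : ∀ x, γ (γ' x) = γ' (γ x))
    (hγδ' : ∀ x, γ (δ' x) = δ' (γ x))
    (hδγ' : ∀ x, δ (γ' x) = γ' (δ x))
    (hδδ' : ∀ x, δ (δ' x) = δ' (δ x))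
    (hγ'δ' : ∀ x, γ' (δ' x) = δ' (γ' x))
    (f : A →ₗ[K] B)
    (hfmul : ∀ x y, f (mulA x y) = mulB (f x) (f y))
    (hfbr : ∀ x y, f (brA x y) = brB (f x) (f y))
    (hfα : ∀ x, f (α x) = γ (f x))
    (hfβ : ∀ x, f (β x) = δ (f x))
    (hfα' : ∀ x, f (α' x) = γ' (f x))
    (hfβ' : ∀ x, f (β' x) = δ' (f x)) :
    (∀ x y, f (mulA.compl₁₂ α' β' x y) = mulB.compl₁₂ γ' δ' (f x) (f y)) ∧
    (∀ x y, f (brA.compl₁₂ α' β' x y) = brB.compl₁₂ γ' δ' (f x) (f y)) ∧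
    (∀ x, f ((α ∘ₗ α') x) = (γ ∘ₗ γ') (f x)) ∧
    (∀ x, f ((β ∘ₗ β') x) = (δ ∘ₗ δ') (f x)) := by
  refine ⟨?_, ?_, ?_, ?_⟩ <;> intros <;>
    simp [LinearMap.compl₁₂_apply, hfmul, hfbr, hfα, hfβ, hfα', hfβ']
end

section
/- Let (A,{·,·},μ) be a Poisson algebra and let α,β : A → A be two commuting Poisson algebra endomorphisms (each multiplicative with respect to both μ and {·,·}). Then (A, {·,·}_{α,β} = {·,·}∘(α⊗β), μ_{α,β} = μ∘(α⊗β), α, β) is a BiHom-Poisson algebra. -/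
/-- Twisting a Poisson algebra along two commuting Poisson endomorphisms
`α`, `β` yields a BiHom-Poisson algebra. -/
theorem poisson_twist_is_biHomPoisson {K A : Type*} [Field K] [CharZero K]
    [AddCommGroup A] [Module K A]
    (br mul : A →ₗ[K] A →ₗ[K] A)
    (hmul_comm : ∀ x y, mul x y = mul y x)
    (hmul_assoc : ∀ x y z, mul (mul x y) z = mul x (mul y z))
    (hskew : ∀ x y, br x y = - br y x)
    (hjacobi : ∀ x y z, br x (br y z) + br y (br z x) + br z (br x y) = 0)
    (hleibniz : ∀ x y z, br (mul x y) z = mul (br x z) y + mul x (br y z))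
    (α β : A →ₗ[K] A)
    (hαβ : ∀ x, α (β x) = β (α x))
    (hαmul : ∀ x y, α (mul x y) = mul (α x) (α y))
    (hαbr : ∀ x y, α (br x y) = br (α x) (α y))
    (hβmul : ∀ x y, β (mul x y) = mul (β x) (β y))
    (hβbr : ∀ x y, β (br x y) = br (β x) (β y)) :
    IsBiHomPoisson (br.compl₁₂ α β) (mul.compl₁₂ α β) α β := by
  have key : ∀ p q r, br p (mul q r) = mul (br p q) r + mul q (br p r) := by
    intro p q r
    rw [hskew p (mul q r), hleibniz q r p, hskew p q, hskew p r]
    simp [neg_add]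
    abel
  constructor <;>
      simp only [LinearMap.compl₁₂_apply, hαmul, hβmul, hαbr, hβbr, hαβ] <;>
    intros
  case comm_maps => trivial
  case map_mul_alpha => trivial
  case map_mul_beta => trivial
  case map_br_alpha => trivial
  case map_br_beta => trivial
  case assoc => rw [hmul_assoc]
  case mul_comm => rw [hmul_comm]
  case skew => rw [hskew]
  case jacobi => exact hjacobi _ _ _
  case leibniz => exact key _ _ _
end

section
/- Let (A,μ) be a flexible algebra, i.e. μ(μ(x,y),x) = μ(x,μ(y,x)) for all x,y ∈ A, and let α,β : A → A be two commuting algebra endomorphisms of (A,μ). Then the BiHom-algebra (A, μ_{α,β} = μ∘(α⊗β), α, β) is BiHom-flexible, i.e. μ_{α,β}(μ_{α,β}(β²(x),αβ(y)),βα²(x)) = μ_{α,β}(αβ²(x),μ_{α,β}(αβ(y),α²(x))) for all x,y ∈ A. -/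
/-- Twisting a flexible algebra along two commuting algebra endomorphisms
gives a BiHom-flexible BiHom-algebra. -/
theorem flexible_twist_is_biHomFlexible {K A : Type*} [Field K] [CharZero K]
    [AddCommGroup A] [Module K A]
    (mul : A →ₗ[K] A →ₗ[K] A)
    (hflex : ∀ x y, mul (mul x y) x = mul x (mul y x))
    (α β : A →ₗ[K] A)
    (hαβ : ∀ x, α (β x) = β (α x))
    (hαmul : ∀ x y, α (mul x y) = mul (α x) (α y))
    (hβmul : ∀ x y, β (mul x y) = mul (β x) (β y)) :
    ∀ x y, mul.compl₁₂ α β (mul.compl₁₂ α β (β (β x)) (α (β y))) (β (α (α x)))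
      = mul.compl₁₂ α β (α (β (β x))) (mul.compl₁₂ α β (α (β y)) (α (α x))) := by
  intro x y
  simp only [LinearMap.compl₁₂_apply, hαmul, hβmul, hαβ]
  exact hflex _ _
end

section
/- Let (A,μ,α,β) be an admissible BiHom-Poisson algebra. Then the cyclic sum of the BiHom-associator vanishes: as(β²(x),αβ(y),α²(z)) + as(β²(y),αβ(z),α²(x)) + as(β²(z),αβ(x),α²(y)) = 0 for all x,y,z ∈ A. -/
/-- The BiHom-associator of a BiHom-algebra `(A, mul, α, β)`:
`as(x,y,z) = μ(μ(x,y),β(z)) − μ(α(x),μ(y,z))`. -/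
def biHomAssoc {K A : Type*} [Field K] [AddCommGroup A] [Module K A]
    (mul : A →ₗ[K] A →ₗ[K] A) (α β : A →ₗ[K] A) (x y z : A) : A :=
  mul (mul x y) (β z) - mul (α x) (mul y z)

/-- The defining identity of an admissible BiHom-Poisson algebra. -/
def IsAdmissibleBiHomPoisson {K A : Type*} [Field K] [AddCommGroup A] [Module K A]
    (mul : A →ₗ[K] A →ₗ[K] A) (α β : A →ₗ[K] A) : Prop :=
  ∀ x y z, biHomAssoc mul α β (β x) (α y) (α (α z)) =
    (3⁻¹ : K) • (mul (mul (β x) (α (β z))) (α (α y))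
      - mul (mul (β (β z)) (α x)) (α (α y))
      + mul (mul (β y) (α (β z))) (α (α x))
      - mul (mul (β y) (α x)) (β (α (α z))))

/-- In an admissible BiHom-Poisson algebra the cyclic sum of the
BiHom-associator vanishes. -/
theorem admissible_biHomPoisson_cyclic_assoc {K A : Type*} [Field K] [CharZero K]
    [AddCommGroup A] [Module K A]
    (mul : A →ₗ[K] A →ₗ[K] A) (α β : A →ₗ[K] A)
    (hαβ : ∀ x, α (β x) = β (α x))
    (hαmul : ∀ x y, α (mul x y) = mul (α x) (α y))
    (hβmul : ∀ x y, β (mul x y) = mul (β x) (β y))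
    (hadm : IsAdmissibleBiHomPoisson mul α β) :
    ∀ x y z, biHomAssoc mul α β (β (β x)) (α (β y)) (α (α z))
      + biHomAssoc mul α β (β (β y)) (α (β z)) (α (α x))
      + biHomAssoc mul α β (β (β z)) (α (β x)) (α (α y)) = 0 := by
  intro x y z
  rw [hadm (β x) (β y) z, hadm (β y) (β z) x, hadm (β z) (β x) y, ← smul_add, ← smul_add]
  apply smul_eq_zero_of_right
  simp only [hαβ]
  abel
end

section
/- Let (A,{·,·},μ,α,β) be a regular BiHom-Poisson algebra (α and β bijective). Then (A,α,β) is a left BiHom-Poisson A-module with structure maps λ(a,b) = μ(a,b) and ρ(a,b) = {a,b}; that is, for all x,y,v ∈ A: λ(α(x),λ(y,v)) = λ(μ(x,y),β(v)); ρ({β(x),y},β(v)) = ρ(αβ(x),ρ(y,v)) − ρ(β(y),ρ(α(x),v)); ρ(αβ(x),λ(y,v)) = λ({β(x),y},β(v)) + λ(β(y),ρ(α(x),v)); and ρ(μ(β(x),y),β(v)) = λ(αβ(x),ρ(y,v)) + λ(β(y),ρ(α(x),v)). -/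
/-- A regular BiHom-Poisson algebra is a left BiHom-Poisson module over itself,
with structure maps `λ = μ` and `ρ = {·,·}`. -/
theorem regular_biHomPoisson_self_module {K A : Type*} [Field K] [CharZero K]
    [AddCommGroup A] [Module K A]
    (br mul : A →ₗ[K] A →ₗ[K] A) (α β : A →ₗ[K] A)
    (h : IsBiHomPoisson br mul α β)
    (hα : Function.Bijective α) (hβ : Function.Bijective β) :
    (∀ x y v : A, mul (α x) (mul y v) = mul (mul x y) (β v)) ∧
    (∀ x y v : A, br (br (β x) y) (β v)
      = br (α (β x)) (br y v) - br (β y) (br (α x) v)) ∧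
    (∀ x y v : A, br (α (β x)) (mul y v)
      = mul (br (β x) y) (β v) + mul (β y) (br (α x) v)) ∧
    (∀ x y v : A, br (mul (β x) y) (β v)
      = mul (α (β x)) (br y v) + mul (β y) (br (α x) v)) := by
  refine ⟨fun x y v => (h.assoc x y v).symm, ?_, h.leibniz, ?_⟩
  · intro x y v
    obtain ⟨a, rfl⟩ := hβ.2 x
    obtain ⟨b₁, rfl⟩ := hβ.2 y
    obtain ⟨b, rfl⟩ := hα.2 b₁
    obtain ⟨c₁, rfl⟩ := hβ.2 v
    obtain ⟨c, rfl⟩ := hα.2 c₁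
    have J := h.jacobi (β c) (α b) (α a)
    have e : β (br (β b) (α a)) = br (β (β b)) (α (β a)) := by
      rw [h.map_br_beta, ← h.comm_maps a]
    have e2 : β (β (α c)) = α (β (β c)) := by
      rw [← h.comm_maps, ← h.comm_maps]
    have e3 : α (br (β b) (α a)) = br (β (α b)) (α (α a)) := by
      rw [h.map_br_alpha, h.comm_maps]
    have HL : br (br (β (β a)) (β (α b))) (β (β (α c)))
        = br (β (β (β c))) (br (β (α b)) (α (α a))) := by
      rw [← h.comm_maps b, h.skew (β a) (β b), map_neg, LinearMap.neg_apply,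
        ← e, e2, h.skew (br (β b) (α a)) (β (β c)), e3, neg_neg, h.comm_maps b]
    have HR1 : br (α (β (β a))) (br (β (α b)) (β (α c)))
        = - br (β (β (α a))) (br (β (β c)) (α (α b))) := by
      rw [show (α (β (β a)) : A) = β (β (α a)) by rw [h.comm_maps, ← h.comm_maps a],
        show (β (α c) : A) = α (β c) from (h.comm_maps c).symm,
        h.skew (α b) (β c), map_neg]
    have HR2 : br (β (β (α b))) (br (α (β a)) (β (α c)))
        = br (β (β (α b))) (br (β (α a)) (α (β c))) := by
      rw [h.comm_maps a, ← h.comm_maps c]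
    rw [HL, HR1, HR2]
    linear_combination (norm := module) J
  · intro x y v
    obtain ⟨y', rfl⟩ := hβ.2 y
    obtain ⟨u₁, rfl⟩ := hα.2 v
    obtain ⟨u, rfl⟩ := hα.2 u₁
    have HL : br (mul (β x) (β y')) (β (α (α u)))
        = mul (br (β x) (α (β u))) (β (α y'))
          - mul (β (α x)) (br (α (β u)) (α y')) := by
      rw [← h.map_mul_beta x y', ← h.comm_maps (α u),
        h.skew (mul x y') (β (α u)),
        show (β (β (α u)) : A) = α (β (β u)) by rw [← h.comm_maps, ← h.comm_maps],
        h.map_mul_alpha, h.leibniz (β u) (α x) (α y'),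
        h.skew (β u) x, map_neg, LinearMap.neg_apply]
      abel
    have HR1 : mul (α (β x)) (br (β y') (α (α u)))
        = - mul (β (α x)) (br (α (β u)) (α y')) := by
      rw [h.skew y' (α u), h.comm_maps x, h.comm_maps u, map_neg]
    have HR2 : mul (β (β y')) (br (α x) (α (α u)))
        = mul (br (β x) (α (β u))) (β (α y')) := by
      rw [← h.map_br_alpha x (α u), h.mul_comm (β y') (br x (α u)),
        h.map_br_beta, h.comm_maps u, ← h.comm_maps y']
    rw [HL, HR1, HR2]
    abel
end
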